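/- Let Φ be a finite reduced crystallographic root system with base S whose Dynkin diagram is connected, i.e. S cannot be partitioned into two nonempty subsets that are mutually orthogonal, and let s be a folding of S. Then either s is an automorphism of the Dynkin diagram, i.e. ⟨sα|sβ∨⟩ = ⟨α|β∨⟩ for all α, β ∈ S, or S consists of exactly three roots γ₁, γ₂, γ₃ with Cartan integers of type B₃, namely ⟨γ₁|γ₂∨⟩ = ⟨γ₃|γ₂∨⟩ = −1, ⟨γ₂|γ₁∨⟩ = −1, ⟨γ₂|γ₃∨⟩ = −2, ⟨γ₁|γ₃∨⟩ = ⟨γ₃|γ₁∨⟩ = 0, and s swaps γ₁ and γ₃ and fixes γ₂. -/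

import Mathlib

/-!
Write `a(u, v) = pairR u v`. Distinct simple roots have `⟪u, v⟫ ≤ 0`, and every nontrivial
combination of simple roots has positive norm; this yields the usual restrictions on the Dynkin
diagram: no triangles or squares, `∑ a(α, γ) a(γ, α) < 4` over pairwise orthogonal neighbours `γ`
of `α`, and no subdiagram of affine type `C̃₃` or `F̃₄`.

The folding identity reads `a(α, β) + a(α, sβ) = a(sα, β) + a(sα, sβ)`. If `sβ = β` it gives
`a(sα, sβ) = a(α, β)`. If `α` and `β` are both moved, `s` maps `α ⊥ β` to `sα ⊥ sβ` (otherwise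
`α, sβ, sα, β` would form an affine `C̃₃`), and then a failure of `a(sα, sβ) = a(α, β)` would
produce a square. Hence a pair with `a(sα, sβ) ≠ a(α, β)` has `α` fixed and `β` moved, and the
bound at `α` with the orthogonal neighbours `β, sβ` forces `{β, α, sβ}` to be a `B₃` diagram. Any
further simple root is orthogonal to it: at the middle vertex the bound is already saturated, and
at the ends the folding identity makes the attachment symmetric, which yields a square or an
affine `F̃₄`. Connectedness then gives `S = {β, α, sβ}`.
-/

open RealInnerProductSpace

variable {V : Type*} [NormedAddCommGroup V] [InnerProductSpace ℝ V]

/-- The pairing `⟨x | v∨⟩ = 2(x,v)/(v,v)` of a vector against the "coroot" of `v`. -/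
noncomputable def pairR (x v : V) : ℝ := 2 * ⟪x, v⟫ / ⟪v, v⟫

/-- The reflection `s_v(x) = x - ⟨x|v∨⟩ v` in the nonzero vector `v`. -/
noncomputable def reflV (v x : V) : V := x - pairR x v • v

/-- A finite reduced crystallographic root system in a real inner product space:
a finite set of nonzero vectors, closed under all of its reflections, with integral
Cartan numbers, such that the only multiples of a root `α` that are roots are `±α`. -/
def IsRootSystem (Φ : Set V) : Prop :=
  Φ.Finite ∧
  (0 : V) ∉ Φ ∧
  (∀ α ∈ Φ, ∀ β ∈ Φ, reflV α β ∈ Φ) ∧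
  (∀ α ∈ Φ, ∀ β ∈ Φ, ∃ n : ℤ, pairR β α = (n : ℝ)) ∧
  (∀ α ∈ Φ, ∀ c : ℝ, c • α ∈ Φ → c • α = α ∨ c • α = -α)

/-- `S` is a base of `Φ`: a linearly independent subset spanning the span of `Φ`
such that every element of `Φ` is an integral linear combination of `S` with
coefficients all of the same sign. -/
def IsBase (Φ S : Set V) : Prop :=
  S ⊆ Φ ∧
  LinearIndependent ℝ ((↑) : S → V) ∧
  Submodule.span ℝ S = Submodule.span ℝ Φ ∧
  ∀ α ∈ Φ, ∃ c : V →₀ ℤ,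
    (↑c.support : Set V) ⊆ S ∧
    α = c.sum (fun v n => (n : ℝ) • v) ∧
    ((∀ v, 0 ≤ c v) ∨ (∀ v, c v ≤ 0))

/-- The positive elements with respect to a base `S`: nonnegative integral
combinations of `S`. -/
def IsPositive (S : Set V) (α : V) : Prop :=
  ∃ c : V →₀ ℤ,
    (↑c.support : Set V) ⊆ S ∧
    α = c.sum (fun v n => (n : ℝ) • v) ∧
    (∀ v, 0 ≤ c v)

/-- `Ψ` is a root subsystem of `Φ`: a nonempty subset stable under its own reflections. -/
def IsRootSubsystem (Φ Ψ : Set V) : Prop :=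
  Ψ ⊆ Φ ∧ Ψ.Nonempty ∧ ∀ ψ ∈ Ψ, ∀ x ∈ Ψ, reflV ψ x ∈ Ψ

/-- `Ψ` is additively closed in `Φ` : `Ψ = Φ ∩ ℤΨ`. -/
def IsAddClosedIn (Φ Ψ : Set V) : Prop :=
  Ψ = Φ ∩ (Submodule.span ℤ Ψ : Set V)

/-- `s` is a folding of the base `S`: an involution of `S` such that
`⟨α|sα∨⟩ = 0` whenever `sα ≠ α`, and `⟨α - sα | β∨ + sβ∨⟩ = 0` for all `α, β ∈ S`. -/
def IsFolding (S : Set V) (s : V → V) : Prop :=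
  (∀ α ∈ S, s α ∈ S) ∧ (∀ α ∈ S, s (s α) = α) ∧
  (∀ α ∈ S, s α ≠ α → pairR α (s α) = 0) ∧
  (∀ α ∈ S, ∀ β ∈ S, pairR (α - s α) β + pairR (α - s α) (s β) = 0)

lemma pairR_sub_left (x y v : V) : pairR (x - y) v = pairR x v - pairR y v := by
  simp only [pairR, inner_sub_left]
  ring

lemma pairR_mul_inner_self {v : V} (hv : v ≠ 0) (x : V) : pairR x v * ⟪v, v⟫ = 2 * ⟪x, v⟫ := by
  have := (real_inner_self_pos.2 hv).ne'
  unfold pairR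
  field_simp

lemma pairR_self {v : V} (hv : v ≠ 0) : pairR v v = 2 := by
  have := (real_inner_self_pos.2 hv).ne'
  unfold pairR
  field_simp

lemma pairR_eq_zero_iff {x v : V} (hv : v ≠ 0) : pairR x v = 0 ↔ ⟪x, v⟫ = 0 := by
  simp [pairR, hv]

lemma pairR_eq_zero_iff' {x v : V} (hx : x ≠ 0) : pairR v x = 0 ↔ ⟪x, v⟫ = 0 := by
  rw [pairR_eq_zero_iff hx, real_inner_comm]

lemma pairR_mul_pairR {u v : V} (hu : u ≠ 0) (hv : v ≠ 0) :
    pairR u v * pairR v u * (⟪u, u⟫ * ⟪v, v⟫) = 4 * ⟪u, v⟫ ^ 2 := by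
  have := (real_inner_self_pos.2 hu).ne'
  have := (real_inner_self_pos.2 hv).ne'
  simp only [pairR, real_inner_comm u v]
  field_simp
  ring

lemma two_mul_inner_eq_of_pairR_eq {x v : V} {c : ℝ} (hv : v ≠ 0) (h : pairR x v = c) :
    2 * ⟪x, v⟫ = c * ⟪v, v⟫ :=
  h ▸ (pairR_mul_inner_self hv x).symm

lemma smul_mem_span_diff {S : Set V} {u v : V} (hv : v ∈ S) (hvu : v ≠ u) (c : ℝ) :
    c • v ∈ Submodule.span ℝ (S \ {u}) :=
  Submodule.smul_mem _ c (Submodule.subset_span ⟨hv, hvu⟩)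

open NormedSpace

namespace IsBase

variable {Φ S : Set V} {u v w : V}

lemma ne_zero (hS : IsBase Φ S) (hΦ : IsRootSystem Φ) (hu : u ∈ S) : u ≠ 0 :=
  fun h => hΦ.2.1 (h ▸ hS.1 hu)

lemma exists_int_pairR (hS : IsBase Φ S) (hΦ : IsRootSystem Φ) (hu : u ∈ S) (hv : v ∈ S) :
    ∃ n : ℤ, pairR u v = n :=
  hΦ.2.2.2.1 v (hS.1 hv) u (hS.1 hu)

lemma inner_nonpos (hS : IsBase Φ S) (hΦ : IsRootSystem Φ) (hu : u ∈ S) (hv : v ∈ S)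
    (huv : u ≠ v) : ⟪u, v⟫ ≤ 0 := by
  by_contra! hpos
  obtain ⟨n, hn⟩ := hS.exists_int_pairR hΦ hu hv
  have hn0 : (0 : ℝ) < n :=
    hn ▸ div_pos (by positivity) (real_inner_self_pos.2 (hS.ne_zero hΦ hv))
  -- The root `u - n • v` has coordinates `1` at `u` and `-n` at `v`, of opposite signs.
  obtain ⟨c, hcS, hc, hsign⟩ := hS.2.2.2 _ (hΦ.2.2.1 v (hS.1 hv) u (hS.1 hu))
  classical
  have hcoord : c.mapRange Int.cast Int.cast_zero =
      Finsupp.single u (1 : ℝ) - Finsupp.single v (n : ℝ) := by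
    refine linearIndepOn_iffₛ.1 (show LinearIndepOn ℝ id S from hS.2.1) _
      (fun x hx => hcS (Finsupp.support_mapRange hx)) _ (fun x hx => ?_) ?_
    · rcases Finset.mem_union.1 (Finsupp.support_sub hx) with h | h <;>
        rw [Finset.mem_singleton.1 (Finsupp.support_single_subset h)] <;> assumption
    · simp only [Finsupp.linearCombination_apply, Finsupp.sum_mapRange_index, zero_smul,
        implies_true, map_sub, Finsupp.sum_single_index, one_smul, id]
      rw [← hc, reflV, hn]
  have hcu : (c u : ℝ) = 1 := by simpa [huv] using congrArg (· u) hcoord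
  have hcv : (c v : ℝ) = -n := by simpa [huv.symm] using congrArg (· v) hcoord
  rcases hsign with h | h
  · linarith [show (0 : ℝ) ≤ c v by exact_mod_cast h v]
  · linarith [show (c u : ℝ) ≤ 0 by exact_mod_cast h u]

lemma inner_smul_add_self_pos (hS : IsBase Φ S) (hu : u ∈ S) {c : ℝ} (hc : c ≠ 0)
    (hw : w ∈ Submodule.span ℝ (S \ {u})) : 0 < ⟪c • u + w, c • u + w⟫ := by
  have hind : LinearIndepOn ℝ id S := hS.2.1
  have hnot : u ∉ Submodule.span ℝ (S \ {u}) := by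
    rw [(hind.mono Set.sdiff_subset).notMem_span_iff_id, Set.insert_sdiff_singleton,
      Set.insert_eq_of_mem hu]
    exact ⟨hind, fun h => h.2 rfl⟩
  refine real_inner_self_pos.2 fun h => hnot ?_
  have hmem := Submodule.smul_mem _ c⁻¹ (Submodule.neg_mem _ hw)
  rwa [← eq_neg_of_add_eq_zero_left h, smul_smul, inv_mul_cancel₀ hc, one_smul] at hmem

lemma one_le_pairR_mul_pairR (hS : IsBase Φ S) (hΦ : IsRootSystem Φ) (hu : u ∈ S) (hv : v ∈ S)
    (h : ⟪u, v⟫ ≠ 0) : 1 ≤ pairR u v * pairR v u := by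
  obtain ⟨m, hm⟩ := hS.exists_int_pairR hΦ hu hv
  obtain ⟨n, hn⟩ := hS.exists_int_pairR hΦ hv hu
  have hprod := pairR_mul_pairR (hS.ne_zero hΦ hu) (hS.ne_zero hΦ hv)
  have hpos : 0 < pairR u v * pairR v u := by
    have hnorms := mul_pos (real_inner_self_pos.2 (hS.ne_zero hΦ hu))
      (real_inner_self_pos.2 (hS.ne_zero hΦ hv))
    by_contra! hle
    nlinarith [mul_nonpos_of_nonpos_of_nonneg hle hnorms.le, pow_pos (abs_pos.2 h) 2, sq_abs ⟪u, v⟫]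
  rw [hm, hn] at hpos ⊢
  exact_mod_cast (show (0 : ℤ) < m * n by exact_mod_cast hpos)

lemma pairR_nonpos (hS : IsBase Φ S) (hΦ : IsRootSystem Φ) (hu : u ∈ S) (hv : v ∈ S)
    (huv : u ≠ v) : pairR u v ≤ 0 :=
  div_nonpos_of_nonpos_of_nonneg (by linarith [hS.inner_nonpos hΦ hu hv huv])
    real_inner_self_nonneg

lemma pairR_eq_neg_one_of_mul_lt_two (hS : IsBase Φ S) (hΦ : IsRootSystem Φ) (hu : u ∈ S)
    (hv : v ∈ S) (huv : u ≠ v) (h : ⟪u, v⟫ ≠ 0) (hlt : pairR u v * pairR v u < 2) :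
    pairR u v = -1 ∧ pairR v u = -1 := by
  have hle := hS.one_le_pairR_mul_pairR hΦ hu hv h
  have hm0 := hS.pairR_nonpos hΦ hu hv huv
  obtain ⟨m, hm⟩ := hS.exists_int_pairR hΦ hu hv
  obtain ⟨n, hn⟩ := hS.exists_int_pairR hΦ hv hu
  rw [hm] at hm0
  rw [hm, hn] at hle hlt ⊢
  have hmn : m * n = 1 := by
    have h1 : (1 : ℤ) ≤ m * n := by exact_mod_cast hle
    have h2 : m * n < 2 := by exact_mod_cast hlt
    omega
  rcases Int.eq_one_or_neg_one_of_mul_eq_one' hmn with ⟨rfl, -⟩ | ⟨rfl, rfl⟩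
  · norm_num at hm0
  · norm_num

lemma inner_normalize_nonpos (hS : IsBase Φ S) (hΦ : IsRootSystem Φ) (hu : u ∈ S) (hv : v ∈ S)
    (huv : u ≠ v) : ⟪normalize u, normalize v⟫ ≤ 0 := by
  rw [NormedSpace.normalize, NormedSpace.normalize, real_inner_smul_left, real_inner_smul_right]
  exact mul_nonpos_of_nonneg_of_nonpos (by positivity)
    (mul_nonpos_of_nonneg_of_nonpos (by positivity) (hS.inner_nonpos hΦ hu hv huv))

lemma inner_normalize_le_neg_half (hS : IsBase Φ S) (hΦ : IsRootSystem Φ) (hu : u ∈ S)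
    (hv : v ∈ S) (huv : u ≠ v) (h : ⟪u, v⟫ ≠ 0) : ⟪normalize u, normalize v⟫ ≤ -1 / 2 := by
  have hu0 := norm_pos_iff.2 (hS.ne_zero hΦ hu)
  have hv0 := norm_pos_iff.2 (hS.ne_zero hΦ hv)
  have hsq : ‖u‖ ^ 2 * ‖v‖ ^ 2 ≤ 4 * ⟪u, v⟫ ^ 2 := by
    have := pairR_mul_pairR (hS.ne_zero hΦ hu) (hS.ne_zero hΦ hv)
    rw [real_inner_self_eq_norm_sq, real_inner_self_eq_norm_sq] at this
    nlinarith [hS.one_le_pairR_mul_pairR hΦ hu hv h]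
  have hle : 2 * ⟪u, v⟫ ≤ -(‖u‖ * ‖v‖) := by
    nlinarith [hS.inner_nonpos hΦ hu hv huv, mul_pos hu0 hv0]
  rw [NormedSpace.normalize, NormedSpace.normalize, real_inner_smul_left, real_inner_smul_right,
    ← mul_assoc, ← mul_inv, inv_mul_le_iff₀ (by positivity)]
  linarith

lemma inner_eq_zero_of_cycle_three (hS : IsBase Φ S) (hΦ : IsRootSystem Φ) (hu : u ∈ S)
    (hv : v ∈ S) (hw : w ∈ S) (huv : u ≠ v) (hvw : v ≠ w) (huw : u ≠ w)
    (h₁ : ⟪u, v⟫ ≠ 0) (h₂ : ⟪v, w⟫ ≠ 0) : ⟪u, w⟫ = 0 := by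
  by_contra h₃
  have hpos : 0 < ⟪normalize u + (normalize v + normalize w),
      normalize u + (normalize v + normalize w)⟫ :=
    hS.inner_smul_add_self_pos hu (inv_ne_zero (norm_ne_zero_iff.2 (hS.ne_zero hΦ hu)))
      (add_mem (smul_mem_span_diff hv huv.symm _) (smul_mem_span_diff hw huw.symm _))
  simp only [inner_add_left, inner_add_right, real_inner_self_eq_norm_sq,
    norm_normalize (hS.ne_zero hΦ hu), norm_normalize (hS.ne_zero hΦ hv),
    norm_normalize (hS.ne_zero hΦ hw), real_inner_comm (normalize u),
    real_inner_comm (normalize v) (normalize w)] at hpos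
  linarith [hS.inner_normalize_le_neg_half hΦ hu hv huv h₁,
    hS.inner_normalize_le_neg_half hΦ hv hw hvw h₂, hS.inner_normalize_le_neg_half hΦ hu hw huw h₃]

lemma inner_eq_zero_of_cycle_four {x : V} (hS : IsBase Φ S) (hΦ : IsRootSystem Φ) (hu : u ∈ S)
    (hv : v ∈ S) (hw : w ∈ S) (hx : x ∈ S) (huv : u ≠ v) (huw : u ≠ w) (hux : u ≠ x)
    (hvw : v ≠ w) (hvx : v ≠ x) (hwx : w ≠ x)
    (h₁ : ⟪u, v⟫ ≠ 0) (h₂ : ⟪v, w⟫ ≠ 0) (h₃ : ⟪w, x⟫ ≠ 0) : ⟪u, x⟫ = 0 := by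
  by_contra h₄
  have hpos : 0 < ⟪normalize u + (normalize v + normalize w + normalize x),
      normalize u + (normalize v + normalize w + normalize x)⟫ :=
    hS.inner_smul_add_self_pos hu (inv_ne_zero (norm_ne_zero_iff.2 (hS.ne_zero hΦ hu)))
      (add_mem (add_mem (smul_mem_span_diff hv huv.symm _) (smul_mem_span_diff hw huw.symm _))
        (smul_mem_span_diff hx hux.symm _))
  simp only [inner_add_left, inner_add_right, real_inner_self_eq_norm_sq,
    norm_normalize (hS.ne_zero hΦ hu), norm_normalize (hS.ne_zero hΦ hv),
    norm_normalize (hS.ne_zero hΦ hw), norm_normalize (hS.ne_zero hΦ hx),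
    real_inner_comm (normalize u), real_inner_comm (normalize v) (normalize w),
    real_inner_comm (normalize v) (normalize x),
    real_inner_comm (normalize w) (normalize x)] at hpos
  linarith [hS.inner_normalize_le_neg_half hΦ hu hv huv h₁,
    hS.inner_normalize_le_neg_half hΦ hv hw hvw h₂, hS.inner_normalize_le_neg_half hΦ hw hx hwx h₃,
    hS.inner_normalize_le_neg_half hΦ hu hx hux h₄, hS.inner_normalize_nonpos hΦ hu hw huw,
    hS.inner_normalize_nonpos hΦ hv hx hvx]

lemma sum_pairR_mul_pairR_lt_four (hS : IsBase Φ S) (hΦ : IsRootSystem Φ) (hu : u ∈ S)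
    {T : Finset V} (hT : ∀ γ ∈ T, γ ∈ S ∧ γ ≠ u)
    (horth : (T : Set V).Pairwise fun γ δ => ⟪γ, δ⟫ = 0) :
    ∑ γ ∈ T, pairR u γ * pairR γ u < 4 := by
  set c : V → ℝ := fun γ => ⟪u, γ⟫ / ⟪γ, γ⟫
  have hγ0 : ∀ γ ∈ T, ⟪γ, γ⟫ ≠ 0 := fun γ hγ =>
    (real_inner_self_pos.2 (hS.ne_zero hΦ (hT γ hγ).1)).ne'
  have hu0 := real_inner_self_pos.2 (hS.ne_zero hΦ hu)
  -- `∑ c γ • γ` is the orthogonal projection of `u` onto the span of `T`.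
  have hpos := hS.inner_smul_add_self_pos hu one_ne_zero (Submodule.neg_mem _
    (Submodule.sum_mem _ fun γ hγ => smul_mem_span_diff (hT γ hγ).1 (hT γ hγ).2 (c γ)))
  have hcross : ⟪u, ∑ γ ∈ T, c γ • γ⟫ = ∑ γ ∈ T, c γ * ⟪u, γ⟫ := by
    simp only [inner_sum, real_inner_smul_right]
  have hsq : ⟪∑ γ ∈ T, c γ • γ, ∑ γ ∈ T, c γ • γ⟫ = ∑ γ ∈ T, c γ * ⟪u, γ⟫ := by
    simp only [sum_inner, inner_sum, real_inner_smul_left, real_inner_smul_right]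
    refine Finset.sum_congr rfl fun γ hγ => ?_
    rw [Finset.sum_eq_single γ (fun δ hδ hδγ => by rw [horth hδ hγ hδγ, mul_zero, mul_zero])
      (fun h => absurd hγ h)]
    simp only [c]
    field_simp [hγ0 γ hγ]
  rw [one_smul, ← sub_eq_add_neg, inner_sub_left, inner_sub_right, inner_sub_right,
    real_inner_comm u (∑ γ ∈ T, c γ • γ), hcross, hsq] at hpos
  have hsum : ∑ γ ∈ T, pairR u γ * pairR γ u = 4 / ⟪u, u⟫ * ∑ γ ∈ T, c γ * ⟪u, γ⟫ := by
    rw [Finset.mul_sum]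
    refine Finset.sum_congr rfl fun γ hγ => ?_
    simp only [pairR, c, real_inner_comm u γ]
    field_simp [hγ0 γ hγ]
    ring
  rw [hsum, div_mul_eq_mul_div, div_lt_iff₀ hu0]
  linarith

lemma pairR_mul_pairR_add_lt_four (hS : IsBase Φ S) (hΦ : IsRootSystem Φ) (hu : u ∈ S)
    (hv : v ∈ S) (hw : w ∈ S) (hvu : v ≠ u) (hwu : w ≠ u) (hvw : v ≠ w) (horth : ⟪v, w⟫ = 0) :
    pairR u v * pairR v u + pairR u w * pairR w u < 4 := by
  classical
  rw [← Finset.sum_pair (f := fun γ => pairR u γ * pairR γ u) hvw]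
  refine hS.sum_pairR_mul_pairR_lt_four hΦ hu (by simp [*]) ?_
  rw [Finset.coe_pair, Set.pairwise_pair]
  exact fun _ => ⟨horth, by rw [real_inner_comm, horth]⟩

lemma exists_int_pairR_le_neg_one (hS : IsBase Φ S) (hΦ : IsRootSystem Φ) (hu : u ∈ S)
    (hv : v ∈ S) (huv : u ≠ v) (h : ⟪u, v⟫ ≠ 0) : ∃ n : ℤ, pairR u v = n ∧ n ≤ -1 := by
  obtain ⟨n, hn⟩ := hS.exists_int_pairR hΦ hu hv
  have hle : (n : ℝ) ≤ 0 := hn ▸ hS.pairR_nonpos hΦ hu hv huv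
  have hne : (n : ℝ) ≠ 0 := hn ▸ (pairR_eq_zero_iff (hS.ne_zero hΦ hv)).not.2 h
  have : n ≤ 0 := by exact_mod_cast hle
  have : n ≠ 0 := by exact_mod_cast hne
  exact ⟨n, hn, by omega⟩

lemma pairR_le_neg_one (hS : IsBase Φ S) (hΦ : IsRootSystem Φ) (hu : u ∈ S) (hv : v ∈ S)
    (huv : u ≠ v) (h : ⟪u, v⟫ ≠ 0) : pairR u v ≤ -1 := by
  obtain ⟨n, hn, hn1⟩ := hS.exists_int_pairR_le_neg_one hΦ hu hv huv h
  rw [hn]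
  exact_mod_cast hn1

end IsBase

def IsCartanB3 (γ₁ γ₂ γ₃ : V) : Prop :=
  pairR γ₁ γ₂ = -1 ∧ pairR γ₃ γ₂ = -1 ∧ pairR γ₂ γ₁ = -1 ∧ pairR γ₂ γ₃ = -2 ∧ ⟪γ₁, γ₃⟫ = 0

namespace IsCartanB3

variable {γ₁ γ₂ γ₃ : V}

lemma ne (h : IsCartanB3 γ₁ γ₂ γ₃) (h₂ : γ₂ ≠ 0) (h₃ : γ₃ ≠ 0) :
    γ₁ ≠ γ₂ ∧ γ₁ ≠ γ₃ ∧ γ₂ ≠ γ₃ := by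
  obtain ⟨-, -, h₂₁, h₂₃, -⟩ := h
  refine ⟨?_, ?_, ?_⟩ <;> rintro rfl
  · linarith [pairR_self h₂]
  · linarith
  · linarith [pairR_self h₃]

lemma inner_ne_zero (h : IsCartanB3 γ₁ γ₂ γ₃) (h₁ : γ₁ ≠ 0) (h₃ : γ₃ ≠ 0) :
    ⟪γ₁, γ₂⟫ ≠ 0 ∧ ⟪γ₂, γ₃⟫ ≠ 0 := by
  obtain ⟨-, -, h₂₁, h₂₃, -⟩ := h
  refine ⟨fun h0 => ?_, fun h0 => ?_⟩
  · rw [real_inner_comm, ← pairR_eq_zero_iff h₁, h₂₁] at h0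
    norm_num at h0
  · rw [← pairR_eq_zero_iff h₃, h₂₃] at h0
    norm_num at h0

end IsCartanB3

namespace IsBase

variable {Φ S : Set V} {γ₁ γ₂ γ₃ δ δ' : V}

lemma not_affineC3 {u₁ u₂ u₃ u₄ : V} (hS : IsBase Φ S) (hΦ : IsRootSystem Φ) (h₁ : u₁ ∈ S)
    (h₂ : u₂ ∈ S) (h₃ : u₃ ∈ S) (h₄ : u₄ ∈ S)
    (h₁₂ : pairR u₁ u₂ = -2) (h₂₁ : pairR u₂ u₁ = -1) (h₂₃ : pairR u₂ u₃ = -1)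
    (h₃₂ : pairR u₃ u₂ = -1) (h₃₄ : pairR u₃ u₄ = -1) (h₄₃ : pairR u₄ u₃ = -2)
    (h₁₃ : ⟪u₁, u₃⟫ = 0) (h₁₄ : ⟪u₁, u₄⟫ = 0) (h₂₄ : ⟪u₂, u₄⟫ = 0) : False := by
  have h0 : ∀ {x}, x ∈ S → x ≠ 0 := hS.ne_zero hΦ
  -- `u₁ + 2u₂ + 2u₃ + u₄` is the null vector of the affine diagram `C̃₃`.
  have hpos := hS.inner_smul_add_self_pos h₁ one_ne_zero
    (add_mem (add_mem (smul_mem_span_diff h₂ ?_ 2) (smul_mem_span_diff h₃ ?_ 2))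
      (smul_mem_span_diff h₄ ?_ 1))
  · simp only [inner_add_left, inner_add_right, real_inner_smul_left, real_inner_smul_right,
      one_mul] at hpos
    linarith [two_mul_inner_eq_of_pairR_eq (h0 h₂) h₁₂, two_mul_inner_eq_of_pairR_eq (h0 h₁) h₂₁,
      two_mul_inner_eq_of_pairR_eq (h0 h₃) h₂₃, two_mul_inner_eq_of_pairR_eq (h0 h₂) h₃₂,
      two_mul_inner_eq_of_pairR_eq (h0 h₄) h₃₄, two_mul_inner_eq_of_pairR_eq (h0 h₃) h₄₃,
      real_inner_comm u₁ u₂, real_inner_comm u₁ u₃, real_inner_comm u₁ u₄, real_inner_comm u₂ u₃,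
      real_inner_comm u₂ u₄, real_inner_comm u₃ u₄]
  · rintro rfl
    linarith [pairR_self (h0 h₁)]
  · rintro rfl
    exact h0 h₁ (inner_self_eq_zero.1 h₁₃)
  · rintro rfl
    exact h0 h₁ (inner_self_eq_zero.1 h₁₄)

lemma inner_eq_zero_of_pairR_eq_add {u₁ u₂ u₃ u₄ : V} (hS : IsBase Φ S) (hΦ : IsRootSystem Φ)
    (h₁ : u₁ ∈ S) (h₂ : u₂ ∈ S) (h₃ : u₃ ∈ S) (h₄ : u₄ ∈ S)
    (h₁₂ : u₁ ≠ u₂) (h₁₃ : u₁ ≠ u₃) (h₂₃ : u₂ ≠ u₃) (h₃₄ : u₃ ≠ u₄)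
    (ho₁₃ : ⟪u₁, u₃⟫ = 0) (ho₁₄ : ⟪u₁, u₄⟫ = 0) (ho₂₄ : ⟪u₂, u₄⟫ = 0)
    (hl : pairR u₁ u₂ = pairR u₃ u₂ + pairR u₃ u₄)
    (hr : pairR u₄ u₃ = pairR u₂ u₁ + pairR u₂ u₃) : ⟪u₂, u₃⟫ = 0 := by
  by_contra h
  have h0 : ∀ {x}, x ∈ S → x ≠ 0 := hS.ne_zero hΦ
  have h₂₃' := hS.pairR_le_neg_one hΦ h₂ h₃ h₂₃ h
  have h₃₂' := hS.pairR_le_neg_one hΦ h₃ h₂ h₂₃.symm (by rwa [real_inner_comm])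
  have h₃₄' := hS.pairR_le_neg_one hΦ h₃ h₄ h₃₄ fun h' => by
    rw [(pairR_eq_zero_iff' (h0 h₃)).2 h'] at hr
    linarith [hS.pairR_nonpos hΦ h₂ h₁ h₁₂.symm]
  obtain ⟨n, hn, hn1⟩ := hS.exists_int_pairR_le_neg_one hΦ h₂ h₁ h₁₂.symm fun h' => by
    rw [(pairR_eq_zero_iff' (h0 h₂)).2 h'] at hl
    linarith
  -- The bound at `u₂` pins the Cartan integers of the path to those of the affine diagram `C̃₃`.
  have hbound := hS.pairR_mul_pairR_add_lt_four hΦ h₂ h₁ h₃ h₁₂ h₂₃.symm h₁₃ ho₁₃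
  have hn1' : pairR u₂ u₁ ≤ -1 := by
    rw [hn]
    exact_mod_cast hn1
  have hdouble : 2 ≤ pairR u₂ u₁ * pairR u₁ u₂ := by nlinarith
  obtain ⟨h₃₂v, h₂₃v⟩ := hS.pairR_eq_neg_one_of_mul_lt_two hΦ h₃ h₂ h₂₃.symm
    (by rwa [real_inner_comm]) (by linarith)
  obtain ⟨m, hm⟩ := hS.exists_int_pairR hΦ h₁ h₂
  rw [h₃₂v, h₂₃v, hm, hn] at hbound
  rw [hm, h₃₂v] at hl
  rw [hn, h₂₃v] at hr
  have hm2 : m ≤ -2 := by exact_mod_cast (show (m : ℝ) ≤ -2 by linarith)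
  have hmn : m * n < 3 := by exact_mod_cast (show (m : ℝ) * n < 3 by linarith [mul_comm (m : ℝ) n])
  obtain rfl : n = -1 := by nlinarith
  obtain rfl : m = -2 := by omega
  push_cast at hm hn hl hr
  exact hS.not_affineC3 hΦ h₁ h₂ h₃ h₄ hm hn h₂₃v h₃₂v (by linarith) (by linarith) ho₁₃ ho₁₄ ho₂₄

lemma isCartanB3_of_pairR_eq {α β β' : V} (hS : IsBase Φ S) (hΦ : IsRootSystem Φ) (hα : α ∈ S)
    (hβ : β ∈ S) (hβ' : β' ∈ S) (hβα : β ≠ α) (hβ'α : β' ≠ α) (hββ' : ⟪β, β'⟫ = 0)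
    (hP : pairR β α = pairR β' α) (hne : pairR α β' ≠ pairR α β) :
    IsCartanB3 β α β' ∨ IsCartanB3 β' α β := by
  have h0 : ∀ {x}, x ∈ S → x ≠ 0 := hS.ne_zero hΦ
  have hzero : ⟪α, β⟫ = 0 ↔ ⟪α, β'⟫ = 0 := by
    rw [← pairR_eq_zero_iff' (h0 hα), ← pairR_eq_zero_iff' (h0 hα), hP]
  have hαβ : ⟪α, β⟫ ≠ 0 := fun h => hne (by
    rw [(pairR_eq_zero_iff (h0 hβ)).2 h, (pairR_eq_zero_iff (h0 hβ')).2 (hzero.1 h)])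
  have hbound := hS.pairR_mul_pairR_add_lt_four hΦ hα hβ hβ' hβα hβ'α
    (fun h => hne (by rw [h])) hββ'
  obtain ⟨p, hp, hp1⟩ := hS.exists_int_pairR_le_neg_one hΦ hα hβ hβα.symm hαβ
  obtain ⟨q, hq, hq1⟩ := hS.exists_int_pairR_le_neg_one hΦ hα hβ' hβ'α.symm (hzero.not.1 hαβ)
  obtain ⟨P, hPv, hP1⟩ := hS.exists_int_pairR_le_neg_one hΦ hβ hα hβα (by rwa [real_inner_comm])
  rw [← hP, hp, hq, hPv] at hbound
  rw [hp, hq] at hne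
  have hb : p * P + q * P < 4 := by exact_mod_cast hbound
  have hpq : q ≠ p := by exact_mod_cast hne
  obtain rfl : P = -1 := by nlinarith [show p + q ≤ -3 by omega]
  have hβα1 : pairR β α = -1 := by rw [hPv]; norm_num
  rcases (show p = -1 ∧ q = -2 ∨ p = -2 ∧ q = -1 by omega) with ⟨rfl, rfl⟩ | ⟨rfl, rfl⟩
  · exact Or.inl ⟨hβα1, hP ▸ hβα1, by rw [hp]; norm_num, by rw [hq]; norm_num, hββ'⟩
  · exact Or.inr ⟨hP ▸ hβα1, hβα1, by rw [hq]; norm_num, by rw [hp]; norm_num,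
      by rw [real_inner_comm, hββ']⟩

lemma not_affineF4 (hS : IsBase Φ S) (hΦ : IsRootSystem Φ) (hB : IsCartanB3 γ₁ γ₂ γ₃)
    (h₁ : γ₁ ∈ S) (h₂ : γ₂ ∈ S) (h₃ : γ₃ ∈ S) (hδ : δ ∈ S) (hδ' : δ' ∈ S)
    (hδγ₁ : pairR δ γ₁ = -1) (hγ₁δ : pairR γ₁ δ = -1)
    (hδ'γ₃ : pairR δ' γ₃ = -1) (hγ₃δ' : pairR γ₃ δ' = -1)
    (hδγ₂ : ⟪δ, γ₂⟫ = 0) (hδγ₃ : ⟪δ, γ₃⟫ = 0) (hδδ' : ⟪δ, δ'⟫ = 0)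
    (hδ'γ₁ : ⟪δ', γ₁⟫ = 0) (hδ'γ₂ : ⟪δ', γ₂⟫ = 0) : False := by
  obtain ⟨hB₁₂, hB₃₂, hB₂₁, hB₂₃, hB₁₃⟩ := hB
  have h0 : ∀ {x}, x ∈ S → x ≠ 0 := hS.ne_zero hΦ
  -- `δ + 2γ₁ + 3γ₂ + 4γ₃ + 2δ'` is the null vector of the affine diagram `F̃₄`.
  have hpos := hS.inner_smul_add_self_pos hδ one_ne_zero
    (add_mem (add_mem (add_mem (smul_mem_span_diff h₁ ?_ 2)
      (smul_mem_span_diff h₂ ?_ 3)) (smul_mem_span_diff h₃ ?_ 4)) (smul_mem_span_diff hδ' ?_ 2))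
  · simp only [inner_add_left, inner_add_right, real_inner_smul_left, real_inner_smul_right,
      one_mul] at hpos
    linarith [two_mul_inner_eq_of_pairR_eq (h0 h₁) hδγ₁, two_mul_inner_eq_of_pairR_eq (h0 hδ) hγ₁δ,
      two_mul_inner_eq_of_pairR_eq (h0 h₃) hδ'γ₃, two_mul_inner_eq_of_pairR_eq (h0 hδ') hγ₃δ',
      two_mul_inner_eq_of_pairR_eq (h0 h₂) hB₁₂, two_mul_inner_eq_of_pairR_eq (h0 h₂) hB₃₂,
      two_mul_inner_eq_of_pairR_eq (h0 h₁) hB₂₁, two_mul_inner_eq_of_pairR_eq (h0 h₃) hB₂₃,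
      real_inner_comm δ γ₁, real_inner_comm δ γ₂, real_inner_comm δ γ₃, real_inner_comm δ δ',
      real_inner_comm γ₁ γ₂, real_inner_comm γ₁ γ₃, real_inner_comm γ₁ δ', real_inner_comm γ₂ γ₃,
      real_inner_comm γ₂ δ', real_inner_comm γ₃ δ']
  · rintro rfl
    linarith [pairR_self (h0 h₁)]
  · rintro rfl
    exact h0 hδ (inner_self_eq_zero.1 hδγ₂)
  · rintro rfl
    exact h0 hδ (inner_self_eq_zero.1 hδγ₃)
  · rintro rfl
    exact h0 hδ (inner_self_eq_zero.1 hδδ')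

lemma inner_middle_eq_zero_of_isCartanB3 (hS : IsBase Φ S) (hΦ : IsRootSystem Φ)
    (hB : IsCartanB3 γ₁ γ₂ γ₃) (h₁ : γ₁ ∈ S) (h₂ : γ₂ ∈ S) (h₃ : γ₃ ∈ S) (hδ : δ ∈ S)
    (hδ₁ : δ ≠ γ₁) (hδ₂ : δ ≠ γ₂) (hδ₃ : δ ≠ γ₃) :
    ⟪δ, γ₂⟫ = 0 ∧ (⟪δ, γ₁⟫ = 0 ∨ ⟪δ, γ₃⟫ = 0) := by
  classical
  obtain ⟨h₁₂, h₁₃, h₂₃⟩ := hB.ne (hS.ne_zero hΦ h₂) (hS.ne_zero hΦ h₃)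
  obtain ⟨hi₁₂, hi₂₃⟩ := hB.inner_ne_zero (hS.ne_zero hΦ h₁) (hS.ne_zero hΦ h₃)
  have hmiddle : ⟪δ, γ₂⟫ = 0 := by
    by_contra hδγ₂
    have hγ₂δ : ⟪γ₂, δ⟫ ≠ 0 := by rwa [real_inner_comm]
    have hγ₁δ := hS.inner_eq_zero_of_cycle_three hΦ h₁ h₂ hδ h₁₂ hδ₂.symm hδ₁.symm hi₁₂ hγ₂δ
    have hγ₃δ := hS.inner_eq_zero_of_cycle_three hΦ h₃ h₂ hδ h₂₃.symm hδ₂.symm hδ₃.symm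
      (by rwa [real_inner_comm]) hγ₂δ
    have hsum := hS.sum_pairR_mul_pairR_lt_four hΦ h₂ (T := {γ₁, γ₃, δ}) (by simp [*, Ne.symm])
      (by simp [Set.pairwise_insert, real_inner_comm, hB.2.2.2.2, *])
    rw [Finset.sum_insert (by simp [h₁₃, hδ₁.symm]), Finset.sum_pair hδ₃.symm, hB.1, hB.2.1,
      hB.2.2.1, hB.2.2.2.1] at hsum
    linarith [hS.one_le_pairR_mul_pairR hΦ h₂ hδ hγ₂δ]
  refine ⟨hmiddle, or_iff_not_imp_left.2 fun hδγ₁ => ?_⟩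
  rw [real_inner_comm]
  exact hS.inner_eq_zero_of_cycle_four hΦ h₃ h₂ h₁ hδ h₂₃.symm h₁₃.symm hδ₃.symm h₁₂.symm hδ₂.symm
    hδ₁.symm (by rwa [real_inner_comm]) (by rwa [real_inner_comm]) (by rwa [real_inner_comm])

lemma inner_eq_zero_of_isCartanB3_of_pairR_eq (hS : IsBase Φ S) (hΦ : IsRootSystem Φ)
    (hB : IsCartanB3 γ₁ γ₂ γ₃) (h₁ : γ₁ ∈ S) (h₂ : γ₂ ∈ S) (h₃ : γ₃ ∈ S) (hδ : δ ∈ S)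
    (hδ' : δ' ∈ S) (hl : pairR δ γ₁ = pairR δ' γ₃) (hr : pairR γ₁ δ = pairR γ₃ δ')
    (hδγ₂ : ⟪δ, γ₂⟫ = 0) (hδγ₃ : ⟪δ, γ₃⟫ = 0) (hδδ' : ⟪δ, δ'⟫ = 0)
    (hδ'γ₁ : ⟪δ', γ₁⟫ = 0) (hδ'γ₂ : ⟪δ', γ₂⟫ = 0) : ⟪δ, γ₁⟫ = 0 := by
  by_contra hx
  have h0 : ∀ {x}, x ∈ S → x ≠ 0 := hS.ne_zero hΦ
  have hδγ₁ : δ ≠ γ₁ := by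
    rintro rfl
    exact (hB.inner_ne_zero (h0 hδ) (h0 h₃)).1 hδγ₂
  have hδ'γ₃ : δ' ≠ γ₃ := by
    rintro rfl
    exact (hB.inner_ne_zero (h0 h₁) (h0 hδ')).2 (by rw [real_inner_comm, hδ'γ₂])
  have hbound := hS.pairR_mul_pairR_add_lt_four hΦ h₃ h₂ hδ' (hB.ne (h0 h₂) (h0 h₃)).2.2
    hδ'γ₃ ?_ (by rw [real_inner_comm, hδ'γ₂])
  · rw [hB.2.1, hB.2.2.2.1, ← hl, ← hr] at hbound
    obtain ⟨hδγ₁v, hγ₁δv⟩ := hS.pairR_eq_neg_one_of_mul_lt_two hΦ hδ h₁ hδγ₁ hx (by linarith)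
    exact hS.not_affineF4 hΦ hB h₁ h₂ h₃ hδ hδ' hδγ₁v hγ₁δv (hl ▸ hδγ₁v) (hr ▸ hγ₁δv)
      hδγ₂ hδγ₃ hδδ' hδ'γ₁ hδ'γ₂
  · rintro rfl
    exact h0 h₂ (inner_self_eq_zero.1 hδ'γ₂)

end IsBase

namespace IsFolding

variable {Φ S : Set V} {s : V → V} {α β γ₁ γ₂ γ₃ δ : V}

lemma pairR_add_pairR_eq (hs : IsFolding S s) (hα : α ∈ S) (hβ : β ∈ S) :
    pairR α β + pairR α (s β) = pairR (s α) β + pairR (s α) (s β) := by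
  have := hs.2.2.2 α hα β hβ
  rw [pairR_sub_left, pairR_sub_left] at this
  linarith

lemma pairR_apply_apply_of_apply_eq_self (hs : IsFolding S s) (hα : α ∈ S) (hβ : β ∈ S)
    (hsβ : s β = β) : pairR (s α) (s β) = pairR α β := by
  have := hs.pairR_add_pairR_eq hα hβ
  rw [hsβ] at this ⊢
  linarith

lemma inner_apply_self_eq_zero (hs : IsFolding S s) (hS : IsBase Φ S) (hΦ : IsRootSystem Φ)
    (hα : α ∈ S) (hsα : s α ≠ α) : ⟪α, s α⟫ = 0 :=
  (pairR_eq_zero_iff (hS.ne_zero hΦ (hs.1 α hα))).1 (hs.2.2.1 α hα hsα)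

lemma inner_apply_apply_eq_zero (hs : IsFolding S s) (hS : IsBase Φ S) (hΦ : IsRootSystem Φ)
    (hα : α ∈ S) (hβ : β ∈ S) (hsα : s α ≠ α) (hsβ : s β ≠ β) (h : ⟪α, β⟫ = 0) :
    ⟪s α, s β⟫ = 0 := by
  by_contra hw
  have hssα := hs.2.1 α hα
  have hssβ := hs.2.1 β hβ
  have h0 : ∀ {x}, x ∈ S → x ≠ 0 := hS.ne_zero hΦ
  have hαβ' : α ≠ s β := by
    intro he
    rw [← he, show s α = β by rw [he, hssβ], real_inner_comm, h] at hw
    exact hw rfl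
  have hα'β : s α ≠ β := by
    intro he
    rw [he, show s β = α by rw [← he, hssα], real_inner_comm, h] at hw
    exact hw rfl
  have hα'β' : s α ≠ s β := by
    intro he
    have hαβ : α = β := by rw [← hssα, he, hssβ]
    rw [← hαβ] at h
    exact h0 hα (inner_self_eq_zero.1 h)
  have hf₁ := hs.pairR_add_pairR_eq hα hβ
  have hf₂ := hs.pairR_add_pairR_eq hβ hα
  rw [(pairR_eq_zero_iff (h0 hβ)).2 h] at hf₁
  rw [(pairR_eq_zero_iff' (h0 hα)).2 h] at hf₂
  exact hw (real_inner_comm (s α) (s β) ▸ hS.inner_eq_zero_of_pairR_eq_add hΦ hα (hs.1 β hβ)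
    (hs.1 α hα) hβ hαβ' (Ne.symm hsα) hα'β'.symm hα'β (hs.inner_apply_self_eq_zero hS hΦ hα hsα)
    h (by rw [real_inner_comm]; exact hs.inner_apply_self_eq_zero hS hΦ hβ hsβ)
    (by linarith) (by linarith))

lemma pairR_apply_apply (hs : IsFolding S s) (hS : IsBase Φ S) (hΦ : IsRootSystem Φ)
    (hα : α ∈ S) (hβ : β ∈ S) (hsα : s α ≠ α) (hsβ : s β ≠ β) :
    pairR (s α) (s β) = pairR α β := by
  have hα' := hs.1 α hα
  have hβ' := hs.1 β hβ
  have hssα := hs.2.1 α hα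
  have hssβ := hs.2.1 β hβ
  have h0 : ∀ {x}, x ∈ S → x ≠ 0 := hS.ne_zero hΦ
  have hαα' := hs.inner_apply_self_eq_zero hS hΦ hα hsα
  by_cases h₁ : ⟪α, β⟫ = 0
  · rw [(pairR_eq_zero_iff (h0 hβ)).2 h₁, (pairR_eq_zero_iff (h0 hβ')).2
      (hs.inner_apply_apply_eq_zero hS hΦ hα hβ hsα hsβ h₁)]
  by_cases h₂ : ⟪α, s β⟫ = 0
  · have h₃ := hs.inner_apply_apply_eq_zero hS hΦ hα hβ' hsα (by rwa [hssβ, ne_comm]) h₂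
    rw [hssβ] at h₃
    have := hs.pairR_add_pairR_eq hα hβ
    rw [(pairR_eq_zero_iff (h0 hβ')).2 h₂, (pairR_eq_zero_iff (h0 hβ)).2 h₃] at this
    linarith
  exfalso
  have h₃ : ⟪s α, β⟫ ≠ 0 := fun h => h₂ (by
    simpa [hssα, hssβ] using hs.inner_apply_apply_eq_zero hS hΦ hα' hβ (by rwa [hssα, ne_comm])
      hsβ h)
  have h₄ : ⟪s α, s β⟫ ≠ 0 := fun h => h₁ (by
    simpa [hssα, hssβ] using hs.inner_apply_apply_eq_zero hS hΦ hα' hβ' (by rwa [hssα, ne_comm])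
      (by rwa [hssβ, ne_comm]) h)
  have hαβ : α ≠ β := by
    rintro rfl
    exact h₂ hαα'
  have hαβ' : α ≠ s β := by
    intro he
    exact h₁ (by rw [show β = s α by rw [← hssβ, ← he], hαα'])
  have hα'β : s α ≠ β := by
    intro he
    exact h₁ (by rw [← he, hαα'])
  have hα'β' : s α ≠ s β := fun he => hαβ (by rw [← hssα, he, hssβ])
  exact h₂ (hS.inner_eq_zero_of_cycle_four hΦ hα hβ hα' hβ' hαβ (Ne.symm hsα) hαβ' hα'β.symm
    (Ne.symm hsβ) hα'β' h₁ (by rwa [real_inner_comm]) h₄)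

lemma isCartanB3_of_apply_eq_self (hs : IsFolding S s) (hS : IsBase Φ S) (hΦ : IsRootSystem Φ)
    (hα : α ∈ S) (hβ : β ∈ S) (hsα : s α = α) (hne : pairR α (s β) ≠ pairR α β) :
    IsCartanB3 β α (s β) ∨ IsCartanB3 (s β) α β := by
  have hsβ : s β ≠ β := fun h => hne (by rw [h])
  have hβα : β ≠ α := fun h => hsβ (by rw [h, hsα])
  refine hS.isCartanB3_of_pairR_eq hΦ hα hβ (hs.1 β hβ) hβα
    (fun h => hβα (by rw [← hs.2.1 β hβ, h, hsα])) (hs.inner_apply_self_eq_zero hS hΦ hβ hsβ)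
    ?_ hne
  have := hs.pairR_add_pairR_eq hβ hα
  rw [hsα] at this
  linarith

lemma inner_eq_zero_of_isCartanB3 (hs : IsFolding S s) (hS : IsBase Φ S) (hΦ : IsRootSystem Φ)
    (hB : IsCartanB3 γ₁ γ₂ γ₃) (h₁ : γ₁ ∈ S) (h₂ : γ₂ ∈ S) (h₃ : γ₃ ∈ S)
    (hs₁ : s γ₁ = γ₃) (hs₂ : s γ₂ = γ₂) (hs₃ : s γ₃ = γ₁)
    (hδ : δ ∈ S) (hδ₁ : δ ≠ γ₁) (hδ₂ : δ ≠ γ₂) (hδ₃ : δ ≠ γ₃) :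
    ⟪δ, γ₁⟫ = 0 ∧ ⟪δ, γ₂⟫ = 0 ∧ ⟪δ, γ₃⟫ = 0 := by
  have h0 : ∀ {x}, x ∈ S → x ≠ 0 := hS.ne_zero hΦ
  have hδ' := hs.1 δ hδ
  have hssδ := hs.2.1 δ hδ
  have hδ'₁ : s δ ≠ γ₁ := fun h => hδ₃ (by rw [← hssδ, h, hs₁])
  have hδ'₂ : s δ ≠ γ₂ := fun h => hδ₂ (by rw [← hssδ, h, hs₂])
  have hδ'₃ : s δ ≠ γ₃ := fun h => hδ₁ (by rw [← hssδ, h, hs₃])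
  obtain ⟨hδγ₂, hδ₁₃⟩ := hS.inner_middle_eq_zero_of_isCartanB3 hΦ hB h₁ h₂ h₃ hδ hδ₁ hδ₂ hδ₃
  obtain ⟨hδ'γ₂, hδ'₁₃⟩ := hS.inner_middle_eq_zero_of_isCartanB3 hΦ hB h₁ h₂ h₃ hδ' hδ'₁ hδ'₂ hδ'₃
  have hpair : ∀ {x y}, x ∈ S → ⟪x, y⟫ = 0 → pairR y x = 0 := fun hx =>
    (pairR_eq_zero_iff' (h0 hx)).2
  have hinner : ∀ {x y}, x ∈ S → pairR y x = 0 → ⟪x, y⟫ = 0 := fun hx =>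
    (pairR_eq_zero_iff' (h0 hx)).1
  have hpair' : ∀ {x y}, y ∈ S → ⟪x, y⟫ = 0 → pairR x y = 0 := fun hy =>
    (pairR_eq_zero_iff (h0 hy)).2
  have hf₁ := hs.pairR_add_pairR_eq hδ h₁
  have hf₂ := hs.pairR_add_pairR_eq h₁ hδ
  rw [hs₁] at hf₁ hf₂
  suffices ⟪δ, γ₁⟫ = 0 ∧ ⟪δ, γ₃⟫ = 0 from ⟨this.1, hδγ₂, this.2⟩
  have hn₁ := hS.pairR_nonpos hΦ h₁ hδ hδ₁.symm
  have hn₃ := hS.pairR_nonpos hΦ h₃ hδ hδ₃.symm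
  have hn₁' := hS.pairR_nonpos hΦ h₁ hδ' hδ'₁.symm
  have hn₃' := hS.pairR_nonpos hΦ h₃ hδ' hδ'₃.symm
  by_cases hsδ : s δ = δ
  · rw [hsδ] at hf₂
    rcases hδ₁₃ with h | h
    · exact ⟨h, hinner hδ (by linarith [hpair hδ h])⟩
    · exact ⟨hinner hδ (by linarith [hpair hδ h]), h⟩
  have hδδ' := hs.inner_apply_self_eq_zero hS hΦ hδ hsδ
  rcases hδ₁₃ with hx | hy <;> rcases hδ'₁₃ with hx' | hy'
  · exact ⟨hx, hinner hδ (by linarith [hpair hδ hx, hpair hδ' hx'])⟩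
  · have h := hS.inner_eq_zero_of_isCartanB3_of_pairR_eq hΦ hB h₁ h₂ h₃ hδ' hδ
      (by linarith [hpair' h₁ hx, hpair' h₃ hy']) (by linarith [hpair hδ hx, hpair hδ' hy'])
      hδ'γ₂ hy' (by rw [real_inner_comm, hδδ']) hx hδγ₂
    exact ⟨hx, (pairR_eq_zero_iff (h0 h₃)).1
      (by linarith [hpair' h₁ hx, hpair' h₃ hy', hpair' h₁ h])⟩
  · exact ⟨hS.inner_eq_zero_of_isCartanB3_of_pairR_eq hΦ hB h₁ h₂ h₃ hδ hδ'
      (by linarith [hpair' h₃ hy, hpair' h₁ hx']) (by linarith [hpair hδ' hx', hpair hδ hy])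
      hδγ₂ hy hδδ' hx' hδ'γ₂, hy⟩
  · exact ⟨hinner hδ (by linarith [hpair hδ hy, hpair hδ' hy']), hy⟩

lemma exists_of_isCartanB3 (hs : IsFolding S s) (hS : IsBase Φ S) (hΦ : IsRootSystem Φ)
    (hconn : ¬ ∃ S₁ S₂ : Set V, S₁ ∪ S₂ = S ∧ S₁.Nonempty ∧ S₂.Nonempty ∧
      S₁ ∩ S₂ = ∅ ∧ ∀ α ∈ S₁, ∀ β ∈ S₂, ⟪α, β⟫ = 0)
    (hB : IsCartanB3 γ₁ γ₂ γ₃) (h₁ : γ₁ ∈ S) (h₂ : γ₂ ∈ S) (h₃ : γ₃ ∈ S)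
    (hs₁ : s γ₁ = γ₃) (hs₂ : s γ₂ = γ₂) :
    ∃ γ₁ γ₂ γ₃ : V,
      S = {γ₁, γ₂, γ₃} ∧ γ₁ ≠ γ₂ ∧ γ₁ ≠ γ₃ ∧ γ₂ ≠ γ₃ ∧
      s γ₁ = γ₃ ∧ s γ₃ = γ₁ ∧ s γ₂ = γ₂ ∧
      pairR γ₁ γ₂ = -1 ∧ pairR γ₃ γ₂ = -1 ∧ pairR γ₂ γ₁ = -1 ∧ pairR γ₂ γ₃ = -2 ∧
      pairR γ₁ γ₃ = 0 ∧ pairR γ₃ γ₁ = 0 := by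
  have hs₃ : s γ₃ = γ₁ := by rw [← hs₁, hs.2.1 γ₁ h₁]
  have hsub : ({γ₁, γ₂, γ₃} : Set V) ⊆ S := by simp [Set.insert_subset_iff, *]
  have hSeq : S = {γ₁, γ₂, γ₃} := by
    refine Set.Subset.antisymm (fun δ hδ => by_contra fun hδT => hconn ?_) hsub
    refine ⟨{γ₁, γ₂, γ₃}, S \ {γ₁, γ₂, γ₃}, Set.union_sdiff_cancel hsub, ⟨γ₁, by simp⟩,
      ⟨δ, hδ, hδT⟩, Set.inter_sdiff_self _ _, ?_⟩
    rintro γ hγ ε ⟨hε, hεT⟩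
    simp only [Set.mem_insert_iff, Set.mem_singleton_iff, not_or] at hγ hεT
    obtain ⟨hε₁, hε₂, hε₃⟩ :=
      hs.inner_eq_zero_of_isCartanB3 hS hΦ hB h₁ h₂ h₃ hs₁ hs₂ hs₃ hε hεT.1 hεT.2.1 hεT.2.2
    rcases hγ with rfl | rfl | rfl <;> rw [real_inner_comm] <;> assumption
  obtain ⟨h₁₂, h₁₃, h₂₃⟩ := hB.ne (hS.ne_zero hΦ h₂) (hS.ne_zero hΦ h₃)
  exact ⟨γ₁, γ₂, γ₃, hSeq, h₁₂, h₁₃, h₂₃, hs₁, hs₃, hs₂, hB.1, hB.2.1, hB.2.2.1, hB.2.2.2.1,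
    (pairR_eq_zero_iff (hS.ne_zero hΦ h₃)).2 hB.2.2.2.2,
    (pairR_eq_zero_iff' (hS.ne_zero hΦ h₁)).2 hB.2.2.2.2⟩

end IsFolding

theorem stmt6_general {V : Type*} [NormedAddCommGroup V] [InnerProductSpace ℝ V]
    (Φ S : Set V)
    (hΦ : IsRootSystem Φ) (hS : IsBase Φ S)
    (hconn : ¬ ∃ S₁ S₂ : Set V, S₁ ∪ S₂ = S ∧ S₁.Nonempty ∧ S₂.Nonempty ∧
      S₁ ∩ S₂ = ∅ ∧ ∀ α ∈ S₁, ∀ β ∈ S₂, ⟪α, β⟫ = 0)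
    (s : V → V) (hfold : IsFolding S s) :
    (∀ α ∈ S, ∀ β ∈ S, pairR (s α) (s β) = pairR α β) ∨
    ∃ γ₁ γ₂ γ₃ : V,
      S = {γ₁, γ₂, γ₃} ∧ γ₁ ≠ γ₂ ∧ γ₁ ≠ γ₃ ∧ γ₂ ≠ γ₃ ∧
      s γ₁ = γ₃ ∧ s γ₃ = γ₁ ∧ s γ₂ = γ₂ ∧
      pairR γ₁ γ₂ = -1 ∧ pairR γ₃ γ₂ = -1 ∧ pairR γ₂ γ₁ = -1 ∧ pairR γ₂ γ₃ = -2 ∧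
      pairR γ₁ γ₃ = 0 ∧ pairR γ₃ γ₁ = 0 := by
  by_cases hauto : ∀ α ∈ S, ∀ β ∈ S, pairR (s α) (s β) = pairR α β
  · exact Or.inl hauto
  push Not at hauto
  obtain ⟨α, hα, β, hβ, hne⟩ := hauto
  have hsβ : s β ≠ β := fun h => hne (hfold.pairR_apply_apply_of_apply_eq_self hα hβ h)
  have hsα : s α = α := by_contra fun h => hne (hfold.pairR_apply_apply hS hΦ hα hβ h hsβ)
  rw [hsα] at hne
  right
  rcases hfold.isCartanB3_of_apply_eq_self hS hΦ hα hβ hsα hne with hB | hB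
  · exact hfold.exists_of_isCartanB3 hS hΦ hconn hB hβ hα (hfold.1 β hβ) rfl hsα
  · exact hfold.exists_of_isCartanB3 hS hΦ hconn hB (hfold.1 β hβ) hα hβ (hfold.2.1 β hβ) hsα

/-- if the Dynkin diagram of the base `S` is connected (no partition into
two nonempty mutually orthogonal parts) and `s` is a folding of `S`, then either `s` is
a diagram automorphism, or `S` consists of three roots with Cartan numbers of type `B₃`,
and `s` swaps the two ends `γ₁, γ₃` and fixes the middle root `γ₂`. -/
theorem stmt6 {V : Type*} [NormedAddCommGroup V] [InnerProductSpace ℝ V]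
    [FiniteDimensional ℝ V] (Φ S : Set V)
    (hΦ : IsRootSystem Φ) (hS : IsBase Φ S)
    (hconn : ¬ ∃ S₁ S₂ : Set V, S₁ ∪ S₂ = S ∧ S₁.Nonempty ∧ S₂.Nonempty ∧
      S₁ ∩ S₂ = ∅ ∧ ∀ α ∈ S₁, ∀ β ∈ S₂, ⟪α, β⟫ = 0)
    (s : V → V) (hfold : IsFolding S s) :
    (∀ α ∈ S, ∀ β ∈ S, pairR (s α) (s β) = pairR α β) ∨
    ∃ γ₁ γ₂ γ₃ : V,
      S = {γ₁, γ₂, γ₃} ∧ γ₁ ≠ γ₂ ∧ γ₁ ≠ γ₃ ∧ γ₂ ≠ γ₃ ∧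
      s γ₁ = γ₃ ∧ s γ₃ = γ₁ ∧ s γ₂ = γ₂ ∧
      pairR γ₁ γ₂ = -1 ∧ pairR γ₃ γ₂ = -1 ∧ pairR γ₂ γ₁ = -1 ∧ pairR γ₂ γ₃ = -2 ∧
      pairR γ₁ γ₃ = 0 ∧ pairR γ₃ γ₁ = 0 :=
  stmt6_general Φ S hΦ hS hconn s hfold
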